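/- The infinite series ∑_{k=2}^∞ (k!)²·k·(3k+1)/(2k+1)! converges to 4π/(9√3). -/

import Mathlib

open Filter Finset Real MeasureTheory
open scoped Nat

/-!
Write `c k = (k!)² / (2k+1)! = ∫₀¹ (x(1-x))^k` (a Beta integral). With
`b k = 2(2k+1)(3k+1)/3 · c k`, the summand equals `2/3 · c k - (b (k+1) - b k)`, so the series
telescopes up to `2/3 ∑ c k`. Summing the geometric series under the integral gives
`∑ c k = ∫₀¹ dx / (1 - x + x²) = 2π / (3√3)`, and `b k → 0` since `c k ≤ 4⁻ᵏ`.
-/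

theorem integral_pow_mul_one_sub_pow (m n : ℕ) :
    ∫ x in (0 : ℝ)..1, x ^ m * (1 - x) ^ n = (m ! * n ! / (m + n + 1)! : ℝ) := by
  have hβ := Complex.betaIntegral_eval_nat_add_one_right (u := m + 1)
    (by rw [Complex.add_re, Complex.natCast_re, Complex.one_re]; positivity) n
  have hprod : ∏ j ∈ range (n + 1), ((m : ℂ) + 1 + j) = (((m + n + 1)! / m ! : ℝ) : ℂ) := by
    rw [add_assoc m n 1, ← Nat.factorial_mul_ascFactorial m (n + 1), Nat.ascFactorial_eq_prod_range]
    push_cast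
    rw [mul_div_cancel_left₀ _ (Nat.cast_ne_zero.2 m.factorial_ne_zero)]
  simp only [Complex.betaIntegral, add_sub_cancel_right, Complex.cpow_natCast, hprod] at hβ
  apply Complex.ofReal_injective
  rw [← intervalIntegral.integral_ofReal]
  push_cast at hβ ⊢
  rw [hβ]
  field_simp

noncomputable def centralBeta (k : ℕ) : ℝ := (k ! : ℝ) ^ 2 / (2 * k + 1)!

theorem centralBeta_eq_integral (k : ℕ) :
    centralBeta k = ∫ x in (0 : ℝ)..1, (x * (1 - x)) ^ k := by
  simp_rw [mul_pow]
  rw [integral_pow_mul_one_sub_pow, centralBeta, two_mul, sq]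

theorem mul_one_sub_le_quarter (x : ℝ) : x * (1 - x) ≤ 1 / 4 := by
  nlinarith [sq_nonneg (x - 1 / 2)]

theorem mul_one_sub_mem_Icc {x : ℝ} (hx : x ∈ Set.Icc 0 1) : x * (1 - x) ∈ Set.Icc 0 (1 / 4) :=
  ⟨mul_nonneg hx.1 (sub_nonneg.2 hx.2), mul_one_sub_le_quarter x⟩

theorem integral_inv_one_sub_mul_one_sub :
    ∫ x in (0 : ℝ)..1, (1 - x * (1 - x))⁻¹ = 2 * π / (3 * √3) := by
  have h3 : √3 ^ 2 = 3 := Real.sq_sqrt (by norm_num)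
  have hscale : ∀ x : ℝ, (1 - x * (1 - x))⁻¹ = 4 / 3 * (1 + (2 / √3 * x + -(√3)⁻¹) ^ 2)⁻¹ := by
    intro x
    have hq : 0 < 1 - x * (1 - x) := by linarith [mul_one_sub_le_quarter x]
    field_simp
    rw [h3]
    ring
  simp_rw [hscale]
  rw [intervalIntegral.integral_const_mul, intervalIntegral.integral_comp_mul_add
    (fun x => (1 + x ^ 2)⁻¹) (by positivity), integral_inv_one_add_sq]
  have e1 : 2 / √3 * 1 + -(√3)⁻¹ = (√3)⁻¹ := by field_simp; ring
  rw [e1, mul_zero, zero_add, arctan_neg, arctan_inv_sqrt_three, smul_eq_mul]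
  field_simp
  rw [h3]
  ring

theorem hasSum_centralBeta : HasSum centralBeta (2 * π / (3 * √3)) := by
  simp_rw [funext centralBeta_eq_integral, ← integral_inv_one_sub_mul_one_sub]
  have hrange {x : ℝ} (hx : x ∈ Set.uIoc 0 1) : x * (1 - x) ∈ Set.Icc 0 (1 / 4) := by
    rw [Set.uIoc_of_le zero_le_one] at hx
    exact mul_one_sub_mem_Icc (Set.Ioc_subset_Icc_self hx)
  refine intervalIntegral.hasSum_integral_of_dominated_convergence (fun n _ => (1 / 4 : ℝ) ^ n)
    (fun n => (by fun_prop : Continuous fun x : ℝ => (x * (1 - x)) ^ n).aestronglyMeasurable)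
    (fun n => ae_of_all _ fun x hx => ?_)
    (ae_of_all _ fun _ _ => summable_geometric_of_lt_one (by norm_num) (by norm_num))
    intervalIntegrable_const (ae_of_all _ fun x hx => ?_)
  · obtain ⟨h0, h4⟩ := hrange hx
    rw [norm_pow, Real.norm_of_nonneg h0]
    exact pow_le_pow_left₀ h0 h4 n
  · obtain ⟨h0, h4⟩ := hrange hx
    exact hasSum_geometric_of_lt_one h0 (by linarith)

theorem centralBeta_le (k : ℕ) : centralBeta k ≤ (1 / 4) ^ k := by
  rw [centralBeta_eq_integral]
  calc ∫ x in (0 : ℝ)..1, (x * (1 - x)) ^ k ≤ ∫ _ in (0 : ℝ)..1, (1 / 4 : ℝ) ^ k := by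
        refine intervalIntegral.integral_mono_on zero_le_one
          ((by fun_prop : Continuous fun x : ℝ => (x * (1 - x)) ^ k).intervalIntegrable 0 1)
          intervalIntegrable_const ?_
        intro x hx
        obtain ⟨h0, h4⟩ := mul_one_sub_mem_Icc hx
        exact pow_le_pow_left₀ h0 h4 k
    _ = (1 / 4) ^ k := by simp

theorem centralBeta_succ (k : ℕ) :
    centralBeta (k + 1) = (k + 1) / (2 * (2 * k + 3)) * centralBeta k := by
  rw [centralBeta, centralBeta, show 2 * (k + 1) + 1 = (2 * k + 1) + 1 + 1 by ring,
    Nat.factorial_succ, Nat.factorial_succ, Nat.factorial_succ]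
  push_cast
  field_simp
  ring

noncomputable def telescopingTerm (k : ℕ) : ℝ := 2 * (2 * k + 1) * (3 * k + 1) / 3 * centralBeta k

theorem summand_eq_sub_telescopingTerm (k : ℕ) :
    (k ! : ℝ) ^ 2 * k * (3 * k + 1) / (2 * k + 1)! =
      2 / 3 * centralBeta k - (telescopingTerm (k + 1) - telescopingTerm k) := by
  rw [telescopingTerm, telescopingTerm, centralBeta_succ, centralBeta]
  push_cast
  field_simp
  ring

theorem tendsto_telescopingTerm : Tendsto telescopingTerm atTop (nhds 0) := by
  have hgeom (j : ℕ) := tendsto_pow_const_mul_const_pow_of_lt_one j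
    (by norm_num : (0 : ℝ) ≤ 1 / 4) (by norm_num)
  have hbound := ((hgeom 2).const_mul 4).add (((hgeom 1).const_mul 4).add (hgeom 0))
  simp only [mul_zero, add_zero] at hbound
  refine squeeze_zero (fun k => ?_) (fun k => ?_) hbound
  · rw [telescopingTerm, centralBeta]
    positivity
  · have hc := centralBeta_le k
    have hc0 : 0 ≤ centralBeta k := by rw [centralBeta]; positivity
    have hk : (0 : ℝ) ≤ k := k.cast_nonneg
    calc telescopingTerm k ≤ (2 * k + 1) ^ 2 * centralBeta k := by
          rw [telescopingTerm]
          nlinarith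
      _ ≤ (2 * k + 1) ^ 2 * (1 / 4) ^ k := by gcongr
      _ = _ := by ring

theorem stmt9 :
    Tendsto (fun N => ∑ k ∈ Ico 2 N,
      ((Nat.factorial k : ℝ))^2 * (k : ℝ) * (3 * (k : ℝ) + 1) /
        (Nat.factorial (2 * k + 1) : ℝ))
      atTop (nhds (4 * Real.pi / (9 * Real.sqrt 3))) := by
  have hlim := ((hasSum_centralBeta.tendsto_sum_nat.sub_const
    (∑ k ∈ range 2, centralBeta k)).const_mul (2 / 3)).sub
    (tendsto_telescopingTerm.sub_const (telescopingTerm 2))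
  have hvalue : 2 / 3 * (2 * π / (3 * √3) - ∑ k ∈ range 2, centralBeta k) - (0 - telescopingTerm 2)
      = 4 * π / (9 * √3) := by
    norm_num [centralBeta, telescopingTerm, sum_range_succ]
    ring
  rw [hvalue] at hlim
  refine hlim.congr' ?_
  filter_upwards [eventually_ge_atTop 2] with N hN
  rw [sum_congr rfl fun k _ => summand_eq_sub_telescopingTerm k, sum_sub_distrib, ← mul_sum, sum_Ico_sub _ hN,
    sum_Ico_eq_sub _ hN]
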